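/- arXiv:1102.0666 — 2 statements merged into one kernel-verified Lean document; each statement's English description precedes it below -/
import Mathlib

section
/- Let L ⊆ Σ* and 0 ≤ ε < 1/2. Then L is recognized with error bound ε by some RT-PFA↻ if and only if L is recognized with error bound ε by some RT-PostPFA. In particular, the class of languages recognized by RT-PFA↻s with bounded error equals PostS. -/
noncomputable section

/-- The input alphabet extended with the two endmarkers `¢` and `$`. -/
inductive ESym (α : Type) : Type where
  | cent : ESym α
  | dollar : ESym α
  | letter : α → ESym α

/-- The state distribution obtained by applying, in order, the matrices for
`¢`, the letters of `w`, and `$` to the standard basis vector at the initial state `0`. -/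
def pRun {α : Type} {n : ℕ} (A : ESym α → Matrix (Fin (n + 1)) (Fin (n + 1)) ℝ)
    (w : List α) : Fin (n + 1) → ℝ :=
  (ESym.cent :: (w.map ESym.letter ++ [ESym.dollar])).foldl
    (fun v σ => (A σ).mulVec v) (Pi.single 0 1)

/-- A real-time probabilistic finite automaton with postselection (RT-PostPFA). -/
structure PostPFA (α : Type) where
  n : ℕ
  A : ESym α → Matrix (Fin (n + 1)) (Fin (n + 1)) ℝ
  nonneg : ∀ σ i j, 0 ≤ A σ i j
  colSum : ∀ σ j, ∑ i, A σ i j = 1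
  Qpa : Finset (Fin (n + 1))
  Qpr : Finset (Fin (n + 1))
  disj : Disjoint Qpa Qpr
  postPos : ∀ w : List α,
    0 < (∑ i ∈ Qpa, pRun A w i) + (∑ i ∈ Qpr, pRun A w i)

/-- Acceptance probability before postselection. -/
def PostPFA.pacc {α : Type} (M : PostPFA α) (w : List α) : ℝ :=
  ∑ i ∈ M.Qpa, pRun M.A w i

/-- Rejection probability before postselection. -/
def PostPFA.prej {α : Type} (M : PostPFA α) (w : List α) : ℝ :=
  ∑ i ∈ M.Qpr, pRun M.A w i

/-- Normalized acceptance probability of an RT-PostPFA. -/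
def PostPFA.fa {α : Type} (M : PostPFA α) (w : List α) : ℝ :=
  M.pacc w / (M.pacc w + M.prej w)

/-- Recognition of a language with error bound `ε`. -/
def PostPFA.Recognizes {α : Type} (M : PostPFA α) (L : Set (List α)) (ε : ℝ) : Prop :=
  ∀ w : List α, (w ∈ L → 1 - ε ≤ M.fa w) ∧ (w ∉ L → M.fa w ≤ ε)

/-- The class of languages recognized by RT-PostPFAs with bounded error. -/
def PostS {α : Type} (L : Set (List α)) : Prop :=
  ∃ (M : PostPFA α) (ε : ℝ), 0 ≤ ε ∧ ε < 1 / 2 ∧ M.Recognizes L ε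

/-- Recognition with zero error: `fa = 1` on members, `fa = 0` on non-members. -/
def PostPFA.RecognizesZero {α : Type} (M : PostPFA α) (L : Set (List α)) : Prop :=
  ∀ w : List α, (w ∈ L → M.fa w = 1) ∧ (w ∉ L → M.fa w = 0)

/-- The class of languages recognized by RT-PostPFAs with zero error. -/
def ZPostS {α : Type} (L : Set (List α)) : Prop :=
  ∃ M : PostPFA α, M.RecognizesZero L

/-- A real-time probabilistic finite automaton with restart (RT-PFA↻),
restarting only at the right end of the input. -/
structure RestartPFA (α : Type) where
  n : ℕ
  A : ESym α → Matrix (Fin (n + 1)) (Fin (n + 1)) ℝ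
  nonneg : ∀ σ i j, 0 ≤ A σ i j
  colSum : ∀ σ j, ∑ i, A σ i j = 1
  Qa : Finset (Fin (n + 1))
  Qr : Finset (Fin (n + 1))
  disj : Disjoint Qa Qr
  haltPos : ∀ w : List α,
    0 < (∑ i ∈ Qa, pRun A w i) + (∑ i ∈ Qr, pRun A w i)

/-- Acceptance probability of a single round. -/
def RestartPFA.pacc {α : Type} (M : RestartPFA α) (w : List α) : ℝ :=
  ∑ i ∈ M.Qa, pRun M.A w i

/-- Rejection probability of a single round. -/
def RestartPFA.prej {α : Type} (M : RestartPFA α) (w : List α) : ℝ :=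
  ∑ i ∈ M.Qr, pRun M.A w i

/-- Overall acceptance probability of an RT-PFA↻: the sum over the number of
restarts of the probability of restarting that many times and then accepting. -/
def RestartPFA.fa {α : Type} (M : RestartPFA α) (w : List α) : ℝ :=
  ∑' i : ℕ, (1 - M.pacc w - M.prej w) ^ i * M.pacc w

/-- Recognition of a language with error bound `ε`. -/
def RestartPFA.Recognizes {α : Type} (M : RestartPFA α) (L : Set (List α)) (ε : ℝ) : Prop :=
  ∀ w : List α, (w ∈ L → 1 - ε ≤ M.fa w) ∧ (w ∉ L → M.fa w ≤ ε)

/-- The class of languages recognized by RT-PFA↻s with bounded error. -/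
def RestartS {α : Type} (L : Set (List α)) : Prop :=
  ∃ (M : RestartPFA α) (ε : ℝ), 0 ≤ ε ∧ ε < 1 / 2 ∧ M.Recognizes L ε

/-!
After `k` restarts the machine halts in round `k + 1` with probability `(1 - pᵃ - pʳ)ᵏ · pᵃ`
for acceptance, so the restart acceptance probability is the geometric series
`pᵃ / (1 - (1 - pᵃ - pʳ)) = pᵃ / (pᵃ + pʳ)`, which is exactly the postselected acceptance
probability of the same automaton with its halting states read as postselection states.
-/

open Matrix Finset

theorem Matrix.mulVec_mem_stdSimplex_of_mem_colStochastic {ι : Type*} [Fintype ι]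
    [DecidableEq ι] {M : Matrix ι ι ℝ} {x : ι → ℝ} (hM : M ∈ colStochastic ℝ ι)
    (hx : x ∈ stdSimplex ℝ ι) : M *ᵥ x ∈ stdSimplex ℝ ι :=
  ⟨nonneg_mulVec_of_mem_colStochastic hM hx.1, by rw [sum_mulVec_of_mem_colStochastic hM, hx.2]⟩

theorem List.foldl_mulVec_mem_stdSimplex {ι S : Type*} [Fintype ι] [DecidableEq ι]
    {A : S → Matrix ι ι ℝ} (hA : ∀ σ, A σ ∈ colStochastic ℝ ι) (l : List S) {x : ι → ℝ}
    (hx : x ∈ stdSimplex ℝ ι) : l.foldl (fun v σ => A σ *ᵥ v) x ∈ stdSimplex ℝ ι := by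
  induction l generalizing x with
  | nil => exact hx
  | cons σ l ih => exact ih (mulVec_mem_stdSimplex_of_mem_colStochastic (hA σ) hx)

theorem sum_add_sum_le_one_of_mem_stdSimplex {ι : Type*} [Fintype ι] {x : ι → ℝ}
    (hx : x ∈ stdSimplex ℝ ι) {s t : Finset ι} (hst : Disjoint s t) :
    ∑ i ∈ s, x i + ∑ i ∈ t, x i ≤ 1 := by
  classical
  rw [← sum_union hst, ← hx.2]
  exact sum_le_sum_of_subset_of_nonneg (subset_univ _) fun i _ _ => hx.1 i

theorem pRun_mem_stdSimplex {α : Type} {n : ℕ} {A : ESym α → Matrix (Fin (n + 1)) (Fin (n + 1)) ℝ}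
    (hA : ∀ σ, A σ ∈ colStochastic ℝ (Fin (n + 1))) (w : List α) :
    pRun A w ∈ stdSimplex ℝ (Fin (n + 1)) :=
  List.foldl_mulVec_mem_stdSimplex hA _ (single_mem_stdSimplex ℝ 0)

theorem tsum_one_sub_sub_pow_mul {a r : ℝ} (hpos : 0 < a + r) (hle : a + r ≤ 1) :
    ∑' i : ℕ, (1 - a - r) ^ i * a = a / (a + r) := by
  rw [tsum_mul_right, sub_sub, tsum_geometric_of_lt_one (by linarith) (by linarith),
    sub_sub_cancel, inv_mul_eq_div]

namespace RestartPFA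

variable {α : Type} (M : RestartPFA α)

theorem fa_eq_div (w : List α) : M.fa w = M.pacc w / (M.pacc w + M.prej w) :=
  tsum_one_sub_sub_pow_mul (M.haltPos w) <|
    sum_add_sum_le_one_of_mem_stdSimplex
      (pRun_mem_stdSimplex (fun σ => mem_colStochastic_iff_sum.2 ⟨M.nonneg σ, M.colSum σ⟩) w)
      M.disj

def toPostPFA : PostPFA α :=
  { n := M.n, A := M.A, nonneg := M.nonneg, colSum := M.colSum,
    Qpa := M.Qa, Qpr := M.Qr, disj := M.disj, postPos := M.haltPos }

theorem toPostPFA_fa (w : List α) : M.toPostPFA.fa w = M.fa w :=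
  (M.fa_eq_div w).symm

theorem Recognizes.toPostPFA {M : RestartPFA α} {L : Set (List α)} {ε : ℝ}
    (h : M.Recognizes L ε) : M.toPostPFA.Recognizes L ε := by
  simpa only [PostPFA.Recognizes, RestartPFA.Recognizes, toPostPFA_fa] using h

end RestartPFA

namespace PostPFA

variable {α : Type} (M : PostPFA α)

def toRestartPFA : RestartPFA α :=
  { n := M.n, A := M.A, nonneg := M.nonneg, colSum := M.colSum,
    Qa := M.Qpa, Qr := M.Qpr, disj := M.disj, haltPos := M.postPos }

theorem toRestartPFA_fa (w : List α) : M.toRestartPFA.fa w = M.fa w :=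
  M.toRestartPFA.fa_eq_div w

theorem Recognizes.toRestartPFA {M : PostPFA α} {L : Set (List α)} {ε : ℝ}
    (h : M.Recognizes L ε) : M.toRestartPFA.Recognizes L ε := by
  simpa only [RestartPFA.Recognizes, PostPFA.Recognizes, toRestartPFA_fa] using h

end PostPFA

theorem exists_restartPFA_recognizes_iff {α : Type} (L : Set (List α)) (ε : ℝ) :
    (∃ M : RestartPFA α, M.Recognizes L ε) ↔ ∃ M : PostPFA α, M.Recognizes L ε :=
  ⟨fun ⟨M, hM⟩ => ⟨M.toPostPFA, hM.toPostPFA⟩, fun ⟨M, hM⟩ => ⟨M.toRestartPFA, hM.toRestartPFA⟩⟩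

theorem restartPFA_iff_postPFA_general (α : Type) :
    (∀ (L : Set (List α)) (ε : ℝ), 0 ≤ ε → ε < 1 / 2 →
      ((∃ M : RestartPFA α, M.Recognizes L ε) ↔ (∃ M : PostPFA α, M.Recognizes L ε))) ∧
      {L : Set (List α) | RestartS L} = {L : Set (List α) | PostS L} := by
  refine ⟨fun L ε _ _ => exists_restartPFA_recognizes_iff L ε, ?_⟩
  ext L
  exact ⟨fun ⟨M, ε, h0, h1, hM⟩ => ⟨M.toPostPFA, ε, h0, h1, hM.toPostPFA⟩,
    fun ⟨M, ε, h0, h1, hM⟩ => ⟨M.toRestartPFA, ε, h0, h1, hM.toRestartPFA⟩⟩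

/-- A language is recognized with error bound `ε` by some RT-PFA↻ iff it is
recognized with error bound `ε` by some RT-PostPFA; in particular the class of
languages recognized by RT-PFA↻s with bounded error equals `PostS`. -/
theorem restartPFA_iff_postPFA (α : Type) [Fintype α] :
    (∀ (L : Set (List α)) (ε : ℝ), 0 ≤ ε → ε < 1 / 2 →
      ((∃ M : RestartPFA α, M.Recognizes L ε) ↔ (∃ M : PostPFA α, M.Recognizes L ε))) ∧
      {L : Set (List α) | RestartS L} = {L : Set (List α) | PostS L} :=
  restartPFA_iff_postPFA_general α
end
end

section
/- PostS is closed under complementation, union, and intersection: if L, L₁, L₂ ⊆ Σ* belong to PostS, then so do Σ* \ L, L₁ ∪ L₂, and L₁ ∩ L₂. -/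
noncomputable section

/-!
Complementation swaps the accepting and rejecting postselection sets, which replaces the
acceptance probability `f` by `1 - f`. For intersection, run two machines in parallel on the
product state space and postselect on "both accept" versus "both postselect, not both accept";
the acceptance probability is then `f₁ f₂`. This only separates members from non-members once
the errors are small, and they can be made arbitrarily small: running a machine against itself
and postselecting on agreement gives acceptance probability `f² / (f² + (1 - f)²)`, which turns
an error `ε` into at most `2 ε²`. Union follows by De Morgan.
-/

open Matrix
open scoped Kronecker

section Kronecker

variable {R l m n p : Type*} [CommSemiring R] [Fintype m] [Fintype p]

theorem Matrix.kronecker_mulVec_mul (A : Matrix l m R) (B : Matrix n p R) (u : m → R)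
    (v : p → R) :
    (A ⊗ₖ B) *ᵥ (fun j => u j.1 * v j.2) = fun i => (A *ᵥ u) i.1 * (B *ᵥ v) i.2 := by
  funext i
  simp only [mulVec, dotProduct, kroneckerMap_apply, Fintype.sum_prod_type,
    Fintype.sum_mul_sum]
  exact Finset.sum_congr rfl fun _ _ => Finset.sum_congr rfl fun _ _ => by ring

theorem Matrix.kronecker_mem_colStochastic [PartialOrder R] [IsOrderedRing R] [DecidableEq m]
    [DecidableEq p] {A : Matrix m m R} {B : Matrix p p R} (hA : A ∈ colStochastic R m)
    (hB : B ∈ colStochastic R p) : A ⊗ₖ B ∈ colStochastic R (m × p) := by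
  refine mem_colStochastic_iff_sum.2 ⟨fun i j => mul_nonneg (hA.1 _ _) (hB.1 _ _), fun j => ?_⟩
  simp only [kroneckerMap_apply, Fintype.sum_prod_type, ← Fintype.sum_mul_sum,
    sum_col_of_mem_colStochastic hA, sum_col_of_mem_colStochastic hB, one_mul]

end Kronecker

theorem sq_div_sq_add_sq_le {a r ε : ℝ} (ha : 0 ≤ a) (hpos : 0 < a + r)
    (h : a / (a + r) ≤ ε) : a ^ 2 / (a ^ 2 + r ^ 2) ≤ 2 * ε ^ 2 := by
  have hsq : 0 < a ^ 2 + r ^ 2 := by nlinarith [mul_pos hpos hpos, sq_nonneg (a - r)]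
  have hε : a ≤ ε * (a + r) := (div_le_iff₀ hpos).1 h
  rw [div_le_iff₀ hsq]
  calc a ^ 2 ≤ ε ^ 2 * (a + r) ^ 2 := by rw [← mul_pow]; exact pow_le_pow_left₀ ha hε 2
    _ ≤ 2 * ε ^ 2 * (a ^ 2 + r ^ 2) := by nlinarith [mul_nonneg (sq_nonneg ε) (sq_nonneg (a - r))]

namespace PostPFA

variable {α : Type}

theorem A_mem_colStochastic (M : PostPFA α) (σ : ESym α) :
    M.A σ ∈ colStochastic ℝ (Fin (M.n + 1)) :=
  mem_colStochastic_iff_sum.2 ⟨M.nonneg σ, M.colSum σ⟩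

theorem pRun_nonneg (M : PostPFA α) (w : List α) (i : Fin (M.n + 1)) : 0 ≤ pRun M.A w i := by
  suffices ∀ (l : List (ESym α)) (v : Fin (M.n + 1) → ℝ), 0 ≤ v →
      0 ≤ l.foldl (fun v σ => M.A σ *ᵥ v) v from
    this _ _ (Pi.single_nonneg.2 zero_le_one) i
  intro l
  induction l with
  | nil => exact fun _ hv => hv
  | cons σ l ih =>
    exact fun v hv => ih _ (nonneg_mulVec_of_mem_colStochastic (M.A_mem_colStochastic σ) hv)

theorem pacc_add_prej_pos (M : PostPFA α) (w : List α) : 0 < M.pacc w + M.prej w :=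
  M.postPos w

theorem pacc_nonneg (M : PostPFA α) (w : List α) : 0 ≤ M.pacc w :=
  Finset.sum_nonneg fun i _ => M.pRun_nonneg w i

theorem prej_nonneg (M : PostPFA α) (w : List α) : 0 ≤ M.prej w :=
  Finset.sum_nonneg fun i _ => M.pRun_nonneg w i

theorem fa_nonneg (M : PostPFA α) (w : List α) : 0 ≤ M.fa w :=
  div_nonneg (M.pacc_nonneg w) (M.pacc_add_prej_pos w).le

theorem one_sub_fa (M : PostPFA α) (w : List α) :
    1 - M.fa w = M.prej w / (M.pacc w + M.prej w) := by
  have hpos := (M.pacc_add_prej_pos w).ne'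
  rw [fa, eq_div_iff hpos, sub_mul, div_mul_cancel₀ _ hpos]
  ring

theorem fa_le_one (M : PostPFA α) (w : List α) : M.fa w ≤ 1 :=
  sub_nonneg.1 (M.one_sub_fa w ▸ div_nonneg (M.prej_nonneg w) (M.pacc_add_prej_pos w).le)

theorem Recognizes.nonneg {M : PostPFA α} {L : Set (List α)} {ε : ℝ} (h : M.Recognizes L ε) :
    0 ≤ ε := by
  by_cases hL : [] ∈ L
  · linarith [(h []).1 hL, M.fa_le_one []]
  · linarith [(h []).2 hL, M.fa_nonneg []]

theorem Recognizes.mono {M : PostPFA α} {L : Set (List α)} {ε ε' : ℝ} (h : M.Recognizes L ε)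
    (hε : ε ≤ ε') : M.Recognizes L ε' := fun w =>
  ⟨fun hw => by linarith [(h w).1 hw], fun hw => by linarith [(h w).2 hw]⟩

def compl (M : PostPFA α) : PostPFA α :=
  { M with
    Qpa := M.Qpr
    Qpr := M.Qpa
    disj := M.disj.symm
    postPos := fun w => add_comm (∑ i ∈ M.Qpa, pRun M.A w i) _ ▸ M.postPos w }

theorem fa_compl (M : PostPFA α) (w : List α) : M.compl.fa w = 1 - M.fa w := by
  rw [one_sub_fa, fa, add_comm]
  rfl

theorem Recognizes.compl {M : PostPFA α} {L : Set (List α)} {ε : ℝ} (h : M.Recognizes L ε) :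
    M.compl.Recognizes Lᶜ ε := fun w => by
  rw [fa_compl]
  exact ⟨fun hw => by linarith [(h w).2 hw], fun hw => by linarith [(h w).1 (not_not.1 hw)]⟩

section Product

variable (M₁ M₂ : PostPFA α)

def prodEquiv : Fin (M₁.n + 1) × Fin (M₂.n + 1) ≃ Fin (M₁.n * M₂.n + M₁.n + M₂.n + 1) :=
  finProdFinEquiv.trans (finCongr (by ring))

theorem prodEquiv_zero : M₁.prodEquiv M₂ (0, 0) = 0 := by
  ext
  simp [prodEquiv, finProdFinEquiv]

def prodMatrix (σ : ESym α) :
    Matrix (Fin (M₁.n * M₂.n + M₁.n + M₂.n + 1)) (Fin (M₁.n * M₂.n + M₁.n + M₂.n + 1)) ℝ :=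
  reindex (M₁.prodEquiv M₂) (M₁.prodEquiv M₂) (M₁.A σ ⊗ₖ M₂.A σ)

theorem prodMatrix_mem_colStochastic (σ : ESym α) :
    M₁.prodMatrix M₂ σ ∈ colStochastic ℝ (Fin (M₁.n * M₂.n + M₁.n + M₂.n + 1)) :=
  reindex_mem_colStochastic
    (kronecker_mem_colStochastic (M₁.A_mem_colStochastic σ) (M₂.A_mem_colStochastic σ))

def prodRun (w : List α) (q : Fin (M₁.n + 1) × Fin (M₂.n + 1)) : ℝ :=
  pRun M₁.A w q.1 * pRun M₂.A w q.2

theorem pRun_prodMatrix (w : List α) (q : Fin (M₁.n + 1) × Fin (M₂.n + 1)) :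
    pRun (M₁.prodMatrix M₂) w (M₁.prodEquiv M₂ q) = M₁.prodRun M₂ w q := by
  let tensor (u : Fin (M₁.n + 1) → ℝ) (v : Fin (M₂.n + 1) → ℝ) :
      Fin (M₁.n * M₂.n + M₁.n + M₂.n + 1) → ℝ :=
    (fun j => u j.1 * v j.2) ∘ (M₁.prodEquiv M₂).symm
  have hinit : Pi.single 0 1 = tensor (Pi.single 0 1) (Pi.single 0 1) := by
    have : (fun j : Fin (M₁.n + 1) × Fin (M₂.n + 1) =>
        (Pi.single 0 1 : Fin (M₁.n + 1) → ℝ) j.1 * (Pi.single 0 1 : Fin (M₂.n + 1) → ℝ) j.2)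
          = Pi.single (0, 0) 1 := by
      funext j
      rcases j with ⟨a, b⟩
      by_cases ha : a = 0 <;> by_cases hb : b = 0 <;> simp [ha, hb]
    simp only [tensor, this, Pi.single_comp_equiv, Equiv.symm_symm, prodEquiv_zero]
  have hstep (u v) (σ : ESym α) :
      tensor (M₁.A σ *ᵥ u) (M₂.A σ *ᵥ v) = M₁.prodMatrix M₂ σ *ᵥ tensor u v := by
    simp only [tensor, prodMatrix, reindex_apply, submatrix_mulVec_equiv, Equiv.symm_symm,
      Function.comp_assoc, Equiv.symm_comp_self, Function.comp_id, kronecker_mulVec_mul]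
  have hrun : pRun (M₁.prodMatrix M₂) w = tensor (pRun M₁.A w) (pRun M₂.A w) := by
    rw [pRun, hinit, List.foldl_hom₂ _ tensor _ _ _ _ _ fun u v σ => hstep u v σ]
    rfl
  simp [hrun, tensor, prodRun]

theorem sum_prodRun_product (w : List α) (s : Finset (Fin (M₁.n + 1)))
    (t : Finset (Fin (M₂.n + 1))) :
    ∑ q ∈ s ×ˢ t, M₁.prodRun M₂ w q = (∑ i ∈ s, pRun M₁.A w i) * ∑ j ∈ t, pRun M₂.A w j := by
  rw [Finset.sum_mul_sum, Finset.sum_product]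
  rfl

def prod (Sa Sr : Finset (Fin (M₁.n + 1) × Fin (M₂.n + 1))) (hd : Disjoint Sa Sr)
    (hpos : ∀ w, 0 < ∑ q ∈ Sa, M₁.prodRun M₂ w q + ∑ q ∈ Sr, M₁.prodRun M₂ w q) :
    PostPFA α where
  n := M₁.n * M₂.n + M₁.n + M₂.n
  A := M₁.prodMatrix M₂
  nonneg σ _ _ := nonneg_of_mem_colStochastic (M₁.prodMatrix_mem_colStochastic M₂ σ)
  colSum σ := sum_col_of_mem_colStochastic (M₁.prodMatrix_mem_colStochastic M₂ σ)
  Qpa := Sa.map (M₁.prodEquiv M₂).toEmbedding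
  Qpr := Sr.map (M₁.prodEquiv M₂).toEmbedding
  disj := Finset.disjoint_map _ |>.2 hd
  postPos w := by
    simpa only [Finset.sum_map, Equiv.coe_toEmbedding, pRun_prodMatrix] using hpos w

variable {M₁ M₂} {Sa Sr : Finset (Fin (M₁.n + 1) × Fin (M₂.n + 1))} {hd : Disjoint Sa Sr}
  {hpos : ∀ w, 0 < ∑ q ∈ Sa, M₁.prodRun M₂ w q + ∑ q ∈ Sr, M₁.prodRun M₂ w q}

theorem pacc_prod (w : List α) :
    (M₁.prod M₂ Sa Sr hd hpos).pacc w = ∑ q ∈ Sa, M₁.prodRun M₂ w q := by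
  simp only [pacc, prod, Finset.sum_map, Equiv.coe_toEmbedding, pRun_prodMatrix]

theorem prej_prod (w : List α) :
    (M₁.prod M₂ Sa Sr hd hpos).prej w = ∑ q ∈ Sr, M₁.prodRun M₂ w q := by
  simp only [prej, prod, Finset.sum_map, Equiv.coe_toEmbedding, pRun_prodMatrix]

end Product

def square (M : PostPFA α) : PostPFA α :=
  M.prod M (M.Qpa ×ˢ M.Qpa) (M.Qpr ×ˢ M.Qpr) (Finset.disjoint_product.2 (.inl M.disj))
    fun w => by
      rw [sum_prodRun_product, sum_prodRun_product]
      change 0 < M.pacc w * M.pacc w + M.prej w * M.prej w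
      have hpos := M.pacc_add_prej_pos w
      nlinarith [mul_pos hpos hpos, sq_nonneg (M.pacc w - M.prej w)]

theorem pacc_square (M : PostPFA α) (w : List α) : M.square.pacc w = M.pacc w ^ 2 := by
  rw [square, pacc_prod, sum_prodRun_product, sq]
  rfl

theorem prej_square (M : PostPFA α) (w : List α) : M.square.prej w = M.prej w ^ 2 := by
  rw [square, prej_prod, sum_prodRun_product, sq]
  rfl

theorem Recognizes.square {M : PostPFA α} {L : Set (List α)} {ε : ℝ} (h : M.Recognizes L ε) :
    M.square.Recognizes L (2 * ε ^ 2) := by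
  intro w
  have ha := M.pacc_nonneg w
  have hr := M.prej_nonneg w
  have hpos := M.pacc_add_prej_pos w
  constructor
  · intro hw
    rw [sub_le_comm, one_sub_fa, pacc_square, prej_square, add_comm]
    refine sq_div_sq_add_sq_le hr (by linarith) ?_
    rw [add_comm, ← one_sub_fa]
    linarith [(h w).1 hw]
  · intro hw
    rw [fa, pacc_square, prej_square]
    exact sq_div_sq_add_sq_le ha hpos ((h w).2 hw)

theorem Recognizes.iterate_square {M : PostPFA α} {L : Set (List α)} {ε : ℝ}
    (h : M.Recognizes L ε) (k : ℕ) :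
    (PostPFA.square^[k] M).Recognizes L ((2 * ε) ^ 2 ^ k / 2) := by
  induction k with
  | zero => simpa using h
  | succ k ih =>
    rw [Function.iterate_succ_apply']
    convert ih.square using 1
    rw [pow_succ, pow_mul]
    ring

theorem Recognizes.exists_recognizes {M : PostPFA α} {L : Set (List α)} {ε : ℝ}
    (h : M.Recognizes L ε) (hε : ε < 1 / 2) {δ : ℝ} (hδ : 0 < δ) :
    ∃ M' : PostPFA α, M'.Recognizes L δ := by
  have h₀ : 0 ≤ 2 * ε := by linarith [h.nonneg]
  obtain ⟨k, hk⟩ := exists_pow_lt_of_lt_one (by linarith : 0 < 2 * δ) (by linarith : 2 * ε < 1)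
  refine ⟨PostPFA.square^[k] M, (h.iterate_square k).mono ?_⟩
  have : (2 * ε) ^ 2 ^ k ≤ (2 * ε) ^ k :=
    pow_le_pow_of_le_one h₀ (by linarith) Nat.lt_two_pow_self.le
  linarith

def inter (M₁ M₂ : PostPFA α) : PostPFA α :=
  M₁.prod M₂ (M₁.Qpa ×ˢ M₂.Qpa) ((M₁.Qpa ∪ M₁.Qpr) ×ˢ (M₂.Qpa ∪ M₂.Qpr) \ M₁.Qpa ×ˢ M₂.Qpa)
    Finset.disjoint_sdiff fun w => by
      rw [add_comm, Finset.sum_sdiff (Finset.product_subset_product Finset.subset_union_left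
        Finset.subset_union_left), sum_prodRun_product, Finset.sum_union M₁.disj,
        Finset.sum_union M₂.disj]
      exact mul_pos (M₁.pacc_add_prej_pos w) (M₂.pacc_add_prej_pos w)

theorem pacc_inter (M₁ M₂ : PostPFA α) (w : List α) :
    (M₁.inter M₂).pacc w = M₁.pacc w * M₂.pacc w := by
  rw [inter, pacc_prod, sum_prodRun_product]
  rfl

theorem pacc_add_prej_inter (M₁ M₂ : PostPFA α) (w : List α) :
    (M₁.inter M₂).pacc w + (M₁.inter M₂).prej w
      = (M₁.pacc w + M₁.prej w) * (M₂.pacc w + M₂.prej w) := by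
  rw [inter, pacc_prod, prej_prod, add_comm, Finset.sum_sdiff (Finset.product_subset_product
    Finset.subset_union_left Finset.subset_union_left), sum_prodRun_product,
    Finset.sum_union M₁.disj, Finset.sum_union M₂.disj]
  rfl

theorem fa_inter (M₁ M₂ : PostPFA α) (w : List α) :
    (M₁.inter M₂).fa w = M₁.fa w * M₂.fa w := by
  rw [fa, pacc_add_prej_inter, pacc_inter, fa, fa, div_mul_div_comm]

theorem Recognizes.inter {M₁ M₂ : PostPFA α} {L₁ L₂ : Set (List α)} {ε : ℝ}
    (h₁ : M₁.Recognizes L₁ ε) (h₂ : M₂.Recognizes L₂ ε) :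
    (M₁.inter M₂).Recognizes (L₁ ∩ L₂) (2 * ε) := by
  intro w
  rw [fa_inter]
  have hf₁ := M₁.fa_nonneg w
  have hf₁' := M₁.fa_le_one w
  have hf₂ := M₂.fa_nonneg w
  have hf₂' := M₂.fa_le_one w
  constructor
  · rintro ⟨hw₁, hw₂⟩
    -- `1 - f₁ f₂ = (1 - f₁) + f₁ (1 - f₂)`
    nlinarith [(h₁ w).1 hw₁, (h₂ w).1 hw₂]
  · intro hw
    have := h₁.nonneg
    rcases not_and_or.1 hw with hw₁ | hw₂
    · nlinarith [(h₁ w).2 hw₁]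
    · nlinarith [(h₂ w).2 hw₂]

end PostPFA

section PostS

variable {α : Type}

theorem PostS.of_recognizes {M : PostPFA α} {L : Set (List α)} {ε : ℝ}
    (h : M.Recognizes L ε) (hε : ε < 1 / 2) : PostS L :=
  ⟨M, ε, h.nonneg, hε, h⟩

theorem PostS.exists_recognizes {L : Set (List α)} (h : PostS L) {δ : ℝ}
    (hδ : 0 < δ) : ∃ M : PostPFA α, M.Recognizes L δ := by
  obtain ⟨M, ε, -, hε, hM⟩ := h
  exact hM.exists_recognizes hε hδ

theorem PostS.compl {L : Set (List α)} (h : PostS L) : PostS Lᶜ := by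
  obtain ⟨M, ε, -, hε, hM⟩ := h
  exact .of_recognizes hM.compl hε

theorem PostS.inter {L₁ L₂ : Set (List α)} (h₁ : PostS L₁) (h₂ : PostS L₂) :
    PostS (L₁ ∩ L₂) := by
  obtain ⟨M₁, hM₁⟩ := h₁.exists_recognizes (by norm_num : (0 : ℝ) < 1 / 8)
  obtain ⟨M₂, hM₂⟩ := h₂.exists_recognizes (by norm_num : (0 : ℝ) < 1 / 8)
  exact .of_recognizes (hM₁.inter hM₂) (by norm_num)

theorem PostS.union {L₁ L₂ : Set (List α)} (h₁ : PostS L₁) (h₂ : PostS L₂) :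
    PostS (L₁ ∪ L₂) := by
  simpa only [Set.compl_inter, compl_compl] using (h₁.compl.inter h₂.compl).compl

end PostS

theorem PostS_closure_general {α : Type} (L L₁ L₂ : Set (List α))
    (hL : PostS L) (h₁ : PostS L₁) (h₂ : PostS L₂) :
    PostS Lᶜ ∧ PostS (L₁ ∪ L₂) ∧ PostS (L₁ ∩ L₂) :=
  ⟨hL.compl, h₁.union h₂, h₁.inter h₂⟩

/-- `PostS` is closed under complementation, union, and intersection. -/
theorem PostS_closure {α : Type} [Fintype α] (L L₁ L₂ : Set (List α))
    (hL : PostS L) (h₁ : PostS L₁) (h₂ : PostS L₂) :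
    PostS Lᶜ ∧ PostS (L₁ ∪ L₂) ∧ PostS (L₁ ∩ L₂) :=
  PostS_closure_general L L₁ L₂ hL h₁ h₂
end
end
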